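/- The function d(A,B) = (1 − m(A,B)m(B,A))/(1 + m(A,B)m(B,A)) is a metric on 𝕊_D and satisfies: (1) (1/2)‖A−B‖ ≤ d(A,B) ≤ 1 for all A,B ∈ 𝕊_D; (2) d(A,B) < 1 for A,B ∈ 𝕊_D°; (3) if A ∈ 𝕊_D°, then d(A,B) = 1 if and only if B ∈ 𝕊_D \ 𝕊_D°. -/

import Mathlib

open MeasureTheory Matrix Filter
open scoped BigOperators ENNReal NNReal ComplexOrder

noncomputable section

abbrev Mat (D : ℕ) := Matrix (Fin D) (Fin D) ℂ

instance {D : ℕ} : MeasurableSpace (Mat D) := MeasurableSpace.pi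

def traceNorm {D : ℕ} (A : Mat D) : ℝ :=
  (((Matrix.posSemidef_conjTranspose_mul_self A).1.eigenvectorUnitary : Mat D) *
    diagonal (fun i => ((Real.sqrt ((Matrix.posSemidef_conjTranspose_mul_self A).1.eigenvalues i) : ℝ) : ℂ)) *
    (star (Matrix.posSemidef_conjTranspose_mul_self A).1.eigenvectorUnitary : Mat D)).trace.re

def SD (D : ℕ) : Set (Mat D) := {A | A.PosSemidef ∧ A.trace = 1}
def SDo (D : ℕ) : Set (Mat D) := {A | A.PosDef ∧ A.trace = 1}

abbrev MapM (D : ℕ) := Mat D →ₗ[ℂ] Mat D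

def IsPositiveMap {D : ℕ} (φ : MapM D) : Prop := ∀ A : Mat D, A.PosSemidef → (φ A).PosSemidef
def IsStrictlyPositiveMap {D : ℕ} (φ : MapM D) : Prop := ∀ A ∈ SD D, (φ A).PosDef

def opNorm {D : ℕ} (φ : MapM D) : ℝ :=
  sSup {x | ∃ A : Mat D, traceNorm A = 1 ∧ x = traceNorm (φ A)}

def vval {D : ℕ} (φ : MapM D) : ℝ := sInf {x | ∃ A ∈ SD D, x = traceNorm (φ A)}

def mcoef {D : ℕ} (A B : Mat D) : ℝ := sSup {l : ℝ | (A - (l : ℂ) • B).PosSemidef}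

def dmet {D : ℕ} (A B : Mat D) : ℝ :=
  (1 - mcoef A B * mcoef B A) / (1 + mcoef A B * mcoef B A)

def NonDestructive {D : ℕ} (φ : MapM D) : Prop := ∀ A ∈ SD D, φ A ≠ 0

def hsAdjoint {D : ℕ} (φ : MapM D) : MapM D where
  toFun A := Matrix.of fun i j => ((φ (Matrix.single i j 1))ᴴ * A).trace
  map_add' A B := by
    ext i j
    simp [Matrix.mul_add]
  map_smul' c A := by
    ext i j
    simp [Matrix.mul_smul]

def NonTransient {D : ℕ} (φ : MapM D) : Prop := NonDestructive (hsAdjoint φ)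

def projAct {D : ℕ} (φ : MapM D) (X : Mat D) : Mat D := ((φ X).trace)⁻¹ • φ X

def ccoef {D : ℕ} (φ : MapM D) : ℝ :=
  sSup {x | ∃ A ∈ SD D, ∃ B ∈ SD D, x = dmet (projAct φ A) (projAct φ B)}

def IsRightPF {D : ℕ} (φ : MapM D) (R : Mat D) : Prop :=
  R ∈ SD D ∧ ∃ Λ : ℝ, 0 < Λ ∧ φ R = (Λ : ℂ) • R ∧
    spectralRadius ℂ (φ : Module.End ℂ (Mat D)) = ENNReal.ofReal Λ

def IsLeftPF {D : ℕ} (φ : MapM D) (L : Mat D) : Prop :=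
  L ∈ SD D ∧ ∃ Λ : ℝ, 0 < Λ ∧ hsAdjoint φ L = (Λ : ℂ) • L ∧
    spectralRadius ℂ (φ : Module.End ℂ (Mat D)) = ENNReal.ofReal Λ

/-- `prodFrom φ0 θ a n ω = φ_n ∘ ⋯ ∘ φ_{a+1}` (identity if `n ≤ a`), where `φ_k = φ0 ∘ θ^k`. -/
def prodFrom {D : ℕ} {Ω : Type*} (φ0 : Ω → MapM D) (θ : Ω → Ω) (a : ℕ) : ℕ → Ω → MapM D
  | 0, _ => LinearMap.id
  | n+1, ω => if n+1 ≤ a then LinearMap.id else (φ0 (θ^[n+1] ω)) ∘ₗ prodFrom φ0 θ a n ω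

/-- `Φ^{(n)} = φ_n ∘ ⋯ ∘ φ_1`. -/
def PhiSeq {D : ℕ} {Ω : Type*} (φ0 : Ω → MapM D) (θ : Ω → Ω) (n : ℕ) (ω : Ω) : MapM D :=
  prodFrom φ0 θ 0 n ω

/-- Assumption 1 : the sequence `Φ^{(n)}` is almost surely eventually strictly positive. -/
def Assumption1 {D : ℕ} {Ω : Type*} [MeasurableSpace Ω] (μ : Measure Ω)
    (φ0 : Ω → MapM D) (θ : Ω → Ω) : Prop :=
  ∀ᵐ ω ∂μ, ∃ n : ℕ, 1 ≤ n ∧ ∀ k : ℕ, IsStrictlyPositiveMap (PhiSeq φ0 θ (n + k) ω)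

/-- iteration of `θ` (for `k ≥ 0`) resp. its inverse `θ'` (for `k < 0`). -/
def zIter {Ω : Type*} (θ θ' : Ω → Ω) : ℤ → Ω → Ω
  | Int.ofNat n, ω => θ^[n] ω
  | Int.negSucc n, ω => θ'^[n+1] ω

/-- `Ψ^{(n)} = ψ_n ∘ ⋯ ∘ ψ_1` where `ψ_k = φ_{-k}*`. -/
def PsiSeq {D : ℕ} {Ω : Type*} (φ0 : Ω → MapM D) (θ' : Ω → Ω) : ℕ → Ω → MapM D
  | 0, _ => LinearMap.id
  | n+1, ω => hsAdjoint (φ0 (θ'^[n+1] ω)) ∘ₗ PsiSeq φ0 θ' n ω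

/-- `Φ^{(-m)} = φ_{-1} ∘ ⋯ ∘ φ_{-m}` (indexed by `m ≥ 1`). -/
def PhiNeg {D : ℕ} {Ω : Type*} (φ0 : Ω → MapM D) (θ' : Ω → Ω) : ℕ → Ω → MapM D
  | 0, _ => LinearMap.id
  | m+1, ω => PhiNeg φ0 θ' m ω ∘ₗ (φ0 (θ'^[m+1] ω))

/-- `compDown f k j = f_k ∘ f_{k+1} ∘ ⋯ ∘ f_{k+j}`. -/
def compDown {D : ℕ} {Ω : Type*} (f : ℕ → Ω → MapM D) (k : ℕ) : ℕ → Ω → MapM D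
  | 0, ω => f k ω
  | j+1, ω => compDown f k j ω ∘ₗ f (k+j+1) ω

/-- the σ-algebra generated by `(φ_k)_{k ≥ n}`. -/
def sigmaUp {D : ℕ} {Ω : Type*} (φ0 : Ω → MapM D) (θ θ' : Ω → Ω) (n : ℤ) :
    MeasurableSpace Ω :=
  ⨆ (k : ℤ) (_ : n ≤ k) (A : Mat D),
    MeasurableSpace.comap (fun ω => φ0 (zIter θ θ' k ω) A) inferInstance

/-- the σ-algebra generated by `(φ_j)_{j ≤ k}`. -/
def sigmaLow {D : ℕ} {Ω : Type*} (φ0 : Ω → MapM D) (θ θ' : Ω → Ω) (k : ℤ) :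
    MeasurableSpace Ω :=
  ⨆ (j : ℤ) (_ : j ≤ k) (A : Mat D),
    MeasurableSpace.comap (fun ω => φ0 (zIter θ θ' j ω) A) inferInstance

/-- Assumption 2 : `E[|ln‖φ₀*‖|] < ∞` and `E[|ln v(φ₀*)|] < ∞`. -/
def Assumption2 {D : ℕ} {Ω : Type*} [MeasurableSpace Ω] (μ : Measure Ω)
    (φ0 : Ω → MapM D) : Prop :=
  Integrable (fun ω => Real.log (opNorm (hsAdjoint (φ0 ω)))) μ ∧
  Integrable (fun ω => Real.log (vval (hsAdjoint (φ0 ω)))) μ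

/-- Assumption 2_p : `ln‖φ₀*‖` and `ln v(φ₀*)` are in `L^p`. -/
def Assumption2p {D : ℕ} {Ω : Type*} [MeasurableSpace Ω] (μ : Measure Ω)
    (φ0 : Ω → MapM D) (p : ℝ) : Prop :=
  MemLp (fun ω => Real.log (opNorm (hsAdjoint (φ0 ω)))) (ENNReal.ofReal p) μ ∧
  MemLp (fun ω => Real.log (vval (hsAdjoint (φ0 ω)))) (ENNReal.ofReal p) μ

/-!
Write `m = mcoef` and `g s = (1 - s) / (1 + s)`, so `d(A,B) = g (m(A,B) m(B,A))`. Adding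
`A - m(A,B) B ≥ 0` to `m(A,B) (B - m(B,C) C) ≥ 0` gives `m(A,B) m(B,C) ≤ m(A,C)`, which turns
the triangle inequality into `g (x y) ≤ g x + g y` on `[0,1]`; and `m(A,B) = 1` makes `A - B`
positive with trace `0`, hence zero. For the trace-norm bound let `P` be the spectral projection
of `A - B` onto its positive part. As `tr (A - B) = 0`, `‖A - B‖ = 2 Re tr (P (A - B))`, and
`0 ≤ P ≤ 1` gives `Re tr (P (A - B)) ≤ tr (A - m(A,B) B) = 1 - m(A,B)`; `1 - P` does the same
for `(B, A)`, and `min (1 - x) (1 - y) ≤ g (x y)`. Finally, if `A > 0` then `A ≥ c ≥ c B` for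
some `c > 0`, so `m(A,B) > 0`, while `m(B,A) > 0` would make `B ≥ m(B,A) A` positive definite.
-/

namespace Matrix

open scoped MatrixOrder

variable {n : Type*} [Fintype n]

lemma isClosed_setOf_posSemidef_sub_smul {A B : Matrix n n ℂ} (hA : A.IsHermitian)
    (hB : B.IsHermitian) : IsClosed {l : ℝ | (A - (l : ℂ) • B).PosSemidef} := by
  have hherm (l : ℝ) : (A - (l : ℂ) • B).IsHermitian := hA.sub (hB.smul (Complex.conj_ofReal l))
  have hset : {l : ℝ | (A - (l : ℂ) • B).PosSemidef} =
      ⋂ x : n → ℂ, {l | l * (star x ⬝ᵥ B *ᵥ x).re ≤ (star x ⬝ᵥ A *ᵥ x).re} := by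
    ext l
    simp only [Set.mem_ofPred_eq, Set.mem_iInter, posSemidef_iff_dotProduct_mulVec, hherm l,
      true_and]
    refine forall_congr' fun x => ?_
    rw [RCLike.nonneg_iff, and_iff_left ((hherm l).im_star_dotProduct_mulVec_self x),
      RCLike.re_to_complex, sub_mulVec, dotProduct_sub, smul_mulVec, dotProduct_smul,
      smul_eq_mul, Complex.sub_re, Complex.re_ofReal_mul, sub_nonneg]
  rw [hset]
  exact isClosed_iInter fun x => isClosed_le (by fun_prop) continuous_const

variable [DecidableEq n]

lemma PosSemidef.trace_mul_nonneg {P Q : Matrix n n ℂ} (hP : P.PosSemidef) (hQ : Q.PosSemidef) :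
    0 ≤ (P * Q).trace := by
  obtain ⟨S, hS, rfl⟩ : ∃ S : Matrix n n ℂ, S.PosSemidef ∧ S * S = P :=
    ⟨CFC.sqrt P, nonneg_iff_posSemidef.mp (CFC.sqrt_nonneg P),
      CFC.sqrt_mul_sqrt_self P (nonneg_iff_posSemidef.mpr hP)⟩
  rw [mul_assoc, trace_mul_comm, mul_assoc, ← mul_assoc]
  nth_rw 2 [← hS.1.eq]
  exact (hQ.mul_mul_conjTranspose_same S).trace_nonneg

lemma PosSemidef.re_trace_mul_le_re_trace {Q Y : Matrix n n ℂ} (hQ : (1 - Q).PosSemidef)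
    (hY : Y.PosSemidef) : (Q * Y).trace.re ≤ Y.trace.re := by
  have h := (Complex.nonneg_iff.mp (hQ.trace_mul_nonneg hY)).1
  rw [sub_mul, one_mul, trace_sub, Complex.sub_re] at h
  linarith

lemma PosSemidef.one_sub_of_trace_eq_one {B : Matrix n n ℂ} (hB : B.PosSemidef)
    (htr : B.trace = 1) : (1 - B).PosSemidef := by
  have hsum : ∑ i, hB.1.eigenvalues i = 1 := by
    rw [hB.1.trace_eq_sum_eigenvalues] at htr
    simpa using congrArg Complex.re htr
  refine le_iff.mp (CFC.le_one (R := ℝ) (a := B) (fun x hx => ?_) hB.isHermitian)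
  obtain ⟨i, rfl⟩ := hB.1.spectrum_real_eq_range_eigenvalues ▸ hx
  rw [← hsum]
  exact Finset.single_le_sum (fun j _ => hB.eigenvalues_nonneg j) (Finset.mem_univ i)

lemma PosDef.exists_pos_posSemidef_sub_smul_one {A : Matrix n n ℂ} (hA : A.PosDef) :
    ∃ c : ℝ, 0 < c ∧ (A - (c : ℂ) • 1).PosSemidef := by
  cases isEmpty_or_nonempty n
  · exact ⟨1, one_pos, Subsingleton.elim 0 (A - _) ▸ PosSemidef.zero⟩
  obtain ⟨c, hc, hcA⟩ := (CFC.exists_pos_algebraMap_le_iff (a := A) hA.isHermitian).mpr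
    fun x hx => by
      obtain ⟨i, rfl⟩ := hA.1.spectrum_real_eq_range_eigenvalues ▸ hx
      exact hA.eigenvalues_pos i
  refine ⟨c, hc, ?_⟩
  rwa [Algebra.algebraMap_eq_smul_one, ← Complex.coe_smul] at hcA

end Matrix

section traceNorm

open scoped MatrixOrder

variable {D : ℕ}

lemma traceNorm_eq_re_trace_cfc_sqrt (A : Mat D) :
    traceNorm A = (cfc Real.sqrt (Aᴴ * A)).trace.re := by
  rw [(posSemidef_conjTranspose_mul_self A).1.cfc_eq, IsHermitian.cfc,
    Unitary.conjStarAlgAut_apply]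
  rfl

lemma Matrix.IsHermitian.traceNorm_eq_re_trace_cfc_abs {X : Mat D} (hX : X.IsHermitian) :
    traceNorm X = (cfc (fun x : ℝ => |x|) X).trace.re := by
  rw [traceNorm_eq_re_trace_cfc_sqrt, hX.eq, ← pow_two,
    ← cfc_comp_pow Real.sqrt 2 X Real.continuous_sqrt.continuousOn hX.isSelfAdjoint]
  simp only [Real.sqrt_sq_eq_abs]

lemma Matrix.IsHermitian.exists_traceNorm_eq_two_mul_re_trace {X : Mat D} (hX : X.IsHermitian)
    (htr : X.trace = 0) :
    ∃ P : Mat D, P.PosSemidef ∧ (1 - P).PosSemidef ∧ traceNorm X = 2 * (P * X).trace.re := by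
  set χ : ℝ → ℝ := fun x => if 0 < x then 1 else 0
  have hcont (f : ℝ → ℝ) : ContinuousOn f (spectrum ℝ X) := X.finite_real_spectrum.continuousOn f
  refine ⟨cfc χ X, nonneg_iff_posSemidef.mp (cfc_nonneg fun x _ => by positivity),
    le_iff.mp (cfc_le_one χ X fun x _ => by dsimp only [χ]; split_ifs <;> norm_num), ?_⟩
  have hPX : cfc χ X * X = cfc (fun x => χ x * x) X := by
    rw [cfc_mul χ (fun x => x) X (hcont _), cfc_id' ℝ X]
  have habs : cfc (fun x : ℝ => |x|) X = cfc (fun x => 2 * (χ x * x) - x) X := by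
    refine cfc_congr fun x _ => ?_
    dsimp only [χ]
    split_ifs with h
    · rw [abs_of_pos h]; ring
    · rw [abs_of_nonpos (not_lt.mp h)]; ring
  rw [hX.traceNorm_eq_re_trace_cfc_abs, habs, cfc_sub (hf := hcont _) (hg := hcont _),
    cfc_const_mul 2 (fun x => χ x * x) X (hcont _), cfc_id' ℝ X, ← hPX,
    trace_sub, trace_smul, htr, sub_zero, Complex.real_smul, Complex.re_ofReal_mul]

end traceNorm

section mcoef

variable {D : ℕ} {A B C : Mat D}

lemma le_one_of_posSemidef_sub_smul (hA : A ∈ SD D) (hB : B ∈ SD D) {l : ℝ}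
    (hl : (A - (l : ℂ) • B).PosSemidef) : l ≤ 1 := by
  have h := hl.trace_nonneg
  rw [trace_sub, trace_smul, hA.2, hB.2, smul_eq_mul, mul_one, ← Complex.ofReal_one,
    ← Complex.ofReal_sub, Complex.zero_le_real, sub_nonneg] at h
  exact h

lemma bddAbove_setOf_posSemidef_sub_smul (hA : A ∈ SD D) (hB : B ∈ SD D) :
    BddAbove {l : ℝ | (A - (l : ℂ) • B).PosSemidef} :=
  ⟨1, fun _ => le_one_of_posSemidef_sub_smul hA hB⟩

lemma zero_mem_setOf_posSemidef_sub_smul (hA : A.PosSemidef) :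
    (0 : ℝ) ∈ {l : ℝ | (A - (l : ℂ) • B).PosSemidef} := by
  simpa using hA

lemma le_mcoef (hA : A ∈ SD D) (hB : B ∈ SD D) {l : ℝ} (hl : (A - (l : ℂ) • B).PosSemidef) :
    l ≤ mcoef A B :=
  le_csSup (bddAbove_setOf_posSemidef_sub_smul hA hB) hl

lemma mcoef_nonneg (hA : A ∈ SD D) (hB : B ∈ SD D) : 0 ≤ mcoef A B :=
  le_mcoef hA hB (zero_mem_setOf_posSemidef_sub_smul hA.1)

lemma mcoef_le_one (hA : A ∈ SD D) (hB : B ∈ SD D) : mcoef A B ≤ 1 :=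
  csSup_le ⟨0, zero_mem_setOf_posSemidef_sub_smul hA.1⟩ fun _ =>
    le_one_of_posSemidef_sub_smul hA hB

lemma posSemidef_sub_mcoef_smul (hA : A ∈ SD D) (hB : B ∈ SD D) :
    (A - (mcoef A B : ℂ) • B).PosSemidef :=
  (isClosed_setOf_posSemidef_sub_smul hA.1.1 hB.1.1).csSup_mem
    ⟨0, zero_mem_setOf_posSemidef_sub_smul hA.1⟩ (bddAbove_setOf_posSemidef_sub_smul hA hB)

lemma mcoef_mul_mcoef_le_mcoef (hA : A ∈ SD D) (hB : B ∈ SD D) (hC : C ∈ SD D) :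
    mcoef A B * mcoef B C ≤ mcoef A C := by
  refine le_mcoef hA hC ?_
  have h : A - ((mcoef A B * mcoef B C : ℝ) : ℂ) • C =
      (A - (mcoef A B : ℂ) • B) + (mcoef A B : ℂ) • (B - (mcoef B C : ℂ) • C) := by
    push_cast
    module
  rw [h]
  exact (posSemidef_sub_mcoef_smul hA hB).add
    ((posSemidef_sub_mcoef_smul hB hC).smul (Complex.zero_le_real.mpr (mcoef_nonneg hA hB)))

lemma mcoef_self (hA : A ∈ SD D) : mcoef A A = 1 :=
  (mcoef_le_one hA hA).antisymm (le_mcoef hA hA (by simpa using PosSemidef.zero))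

lemma eq_of_mcoef_eq_one (hA : A ∈ SD D) (hB : B ∈ SD D) (h : mcoef A B = 1) : A = B := by
  have hpsd := posSemidef_sub_mcoef_smul hA hB
  rw [h, Complex.ofReal_one, one_smul] at hpsd
  rw [← sub_eq_zero, ← hpsd.trace_eq_zero_iff, trace_sub, hA.2, hB.2, sub_self]

lemma mcoef_pos_of_posDef (hA : A ∈ SD D) (hA' : A.PosDef) (hB : B ∈ SD D) : 0 < mcoef A B := by
  obtain ⟨c, hc, hcA⟩ := hA'.exists_pos_posSemidef_sub_smul_one
  refine hc.trans_le (le_mcoef hA hB ?_)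
  have h : A - (c : ℂ) • B = (A - (c : ℂ) • 1) + (c : ℂ) • (1 - B) := by module
  rw [h]
  exact hcA.add ((hB.1.one_sub_of_trace_eq_one hB.2).smul (Complex.zero_le_real.mpr hc.le))

lemma mcoef_eq_zero_of_not_posDef (hA : A ∈ SD D) (hA' : A.PosDef) (hB : B ∈ SD D)
    (hB' : ¬ B.PosDef) : mcoef B A = 0 := by
  refine le_antisymm (csSup_le ⟨0, zero_mem_setOf_posSemidef_sub_smul hB.1⟩ fun l hl => ?_)
    (mcoef_nonneg hB hA)
  by_contra! hl0
  have h : B = (B - (l : ℂ) • A) + (l : ℂ) • A := by module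
  exact hB' (h ▸ PosDef.posSemidef_add hl (hA'.smul (Complex.zero_lt_real.mpr hl0)))

lemma re_trace_mul_sub_le_one_sub_mcoef {Q : Mat D} (hA : A ∈ SD D) (hB : B ∈ SD D)
    (hQ : Q.PosSemidef) (hQ1 : (1 - Q).PosSemidef) :
    (Q * (A - B)).trace.re ≤ 1 - mcoef A B := by
  set l := mcoef A B
  have hM := posSemidef_sub_mcoef_smul hA hB
  have hQB : 0 ≤ (Q * B).trace.re := (Complex.nonneg_iff.mp (hQ.trace_mul_nonneg hB.1)).1
  have hQM := hQ1.re_trace_mul_le_re_trace hM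
  have htrM : (A - (l : ℂ) • B).trace.re = 1 - l := by
    simp [trace_sub, trace_smul, hA.2, hB.2]
  have hsplit : (Q * (A - B)).trace.re =
      (Q * (A - (l : ℂ) • B)).trace.re - (1 - l) * (Q * B).trace.re := by
    have h : Q * (A - B) = Q * (A - (l : ℂ) • B) - ((1 - l : ℝ) : ℂ) • (Q * B) := by
      rw [mul_sub, mul_sub, Matrix.mul_smul]
      push_cast
      module
    rw [h, trace_sub, trace_smul, Complex.sub_re, smul_eq_mul, Complex.re_ofReal_mul]
  have := mul_nonneg (sub_nonneg.mpr (mcoef_le_one hA hB)) hQB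
  linarith

lemma half_traceNorm_sub_le_min (hA : A ∈ SD D) (hB : B ∈ SD D) :
    1 / 2 * traceNorm (A - B) ≤ min (1 - mcoef A B) (1 - mcoef B A) := by
  have htr : (A - B).trace = 0 := by rw [trace_sub, hA.2, hB.2, sub_self]
  obtain ⟨P, hP, hP1, hnorm⟩ := (hA.1.1.sub hB.1.1).exists_traceNorm_eq_two_mul_re_trace htr
  have hAB := re_trace_mul_sub_le_one_sub_mcoef hA hB hP hP1
  have hBA := re_trace_mul_sub_le_one_sub_mcoef hB hA hP1 (by simpa using hP)
  have hflip : ((1 - P) * (B - A)).trace = (P * (A - B)).trace := by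
    rw [show (1 - P) * (B - A) = (B - A) + P * (A - B) by noncomm_ring, trace_add,
      trace_sub, hA.2, hB.2, sub_self, zero_add]
  rw [hflip] at hBA
  rw [hnorm]
  exact le_min (by linarith) (by linarith)

end mcoef

lemma min_one_sub_le_one_sub_div_one_add {x y : ℝ} (hx0 : 0 ≤ x) (hy0 : 0 ≤ y) : min (1 - x) (1 - y) ≤ (1 - x * y) / (1 + x * y) := by
  rw [le_div_iff₀ (by positivity)]
  rcases le_total x y with h | h
  · rw [min_eq_right (by linarith)]
    nlinarith [mul_nonneg hy0 (sq_nonneg (1 - x)), mul_nonneg (mul_nonneg hx0 hy0) (sub_nonneg.mpr h)]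
  · rw [min_eq_left (by linarith)]
    nlinarith [mul_nonneg hx0 (sq_nonneg (1 - y)), mul_nonneg (mul_nonneg hx0 hy0) (sub_nonneg.mpr h)]

lemma one_sub_div_one_add_le_add_of_mul_le {x y z : ℝ} (hx0 : 0 ≤ x) (hx1 : x ≤ 1)
    (hy0 : 0 ≤ y) (hy1 : y ≤ 1) (hxy : x * y ≤ z) :
    (1 - z) / (1 + z) ≤ (1 - x) / (1 + x) + (1 - y) / (1 + y) := by
  have hxy0 : 0 ≤ x * y := mul_nonneg hx0 hy0
  have hxy1 : x * y ≤ 1 := mul_le_one₀ hx1 hy0 hy1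
  calc (1 - z) / (1 + z) ≤ (1 - x * y) / (1 + x * y) := by
        rw [div_le_div_iff₀ (by linarith) (by linarith)]
        nlinarith
    _ ≤ (1 - x) / (1 + x) + (1 - y) / (1 + y) := by
        rw [div_add_div _ _ (by linarith) (by linarith), div_le_div_iff₀ (by linarith)
          (by positivity)]
        nlinarith [mul_nonneg (mul_nonneg (sub_nonneg.mpr hx1) (sub_nonneg.mpr hy1))
          (sub_nonneg.mpr hxy1)]

section dmet

variable {D : ℕ} {A B C : Mat D}

lemma mcoef_mul_mcoef_nonneg (hA : A ∈ SD D) (hB : B ∈ SD D) : 0 ≤ mcoef A B * mcoef B A :=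
  mul_nonneg (mcoef_nonneg hA hB) (mcoef_nonneg hB hA)

lemma mcoef_mul_mcoef_le_one (hA : A ∈ SD D) (hB : B ∈ SD D) : mcoef A B * mcoef B A ≤ 1 :=
  (mcoef_mul_mcoef_le_mcoef hA hB hA).trans (mcoef_self hA).le

lemma dmet_comm (A B : Mat D) : dmet A B = dmet B A := by
  rw [dmet, dmet, mul_comm]

lemma dmet_nonneg (hA : A ∈ SD D) (hB : B ∈ SD D) : 0 ≤ dmet A B := by
  have := mcoef_mul_mcoef_nonneg hA hB
  exact div_nonneg (by linarith [mcoef_mul_mcoef_le_one hA hB]) (by linarith)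

lemma dmet_le_one (hA : A ∈ SD D) (hB : B ∈ SD D) : dmet A B ≤ 1 := by
  have := mcoef_mul_mcoef_nonneg hA hB
  rw [dmet, div_le_one (by linarith)]
  linarith

lemma dmet_eq_zero_iff (hA : A ∈ SD D) (hB : B ∈ SD D) : dmet A B = 0 ↔ A = B := by
  refine ⟨fun h => eq_of_mcoef_eq_one hA hB ?_, fun h => by simp [h, dmet, mcoef_self hB]⟩
  have h0 := mcoef_mul_mcoef_nonneg hA hB
  rw [dmet, div_eq_zero_iff, sub_eq_zero] at h
  refine le_antisymm (mcoef_le_one hA hB) ?_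
  nlinarith [h.resolve_right (by linarith), mcoef_le_one hB hA, mcoef_nonneg hA hB]

lemma dmet_triangle (hA : A ∈ SD D) (hB : B ∈ SD D) (hC : C ∈ SD D) :
    dmet A C ≤ dmet A B + dmet B C := by
  refine one_sub_div_one_add_le_add_of_mul_le (mcoef_mul_mcoef_nonneg hA hB)
    (mcoef_mul_mcoef_le_one hA hB) (mcoef_mul_mcoef_nonneg hB hC)
    (mcoef_mul_mcoef_le_one hB hC) ?_
  calc mcoef A B * mcoef B A * (mcoef B C * mcoef C B)
      = (mcoef A B * mcoef B C) * (mcoef C B * mcoef B A) := by ring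
    _ ≤ mcoef A C * mcoef C A :=
      mul_le_mul (mcoef_mul_mcoef_le_mcoef hA hB hC) (mcoef_mul_mcoef_le_mcoef hC hB hA)
        (mul_nonneg (mcoef_nonneg hC hB) (mcoef_nonneg hB hA)) (mcoef_nonneg hA hC)

lemma half_traceNorm_sub_le_dmet (hA : A ∈ SD D) (hB : B ∈ SD D) :
    1 / 2 * traceNorm (A - B) ≤ dmet A B :=
  (half_traceNorm_sub_le_min hA hB).trans <| min_one_sub_le_one_sub_div_one_add
    (mcoef_nonneg hA hB) (mcoef_nonneg hB hA)

lemma dmet_lt_one_of_posDef (hA : A ∈ SD D) (hA' : A.PosDef) (hB : B ∈ SD D) (hB' : B.PosDef) :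
    dmet A B < 1 := by
  have := mul_pos (mcoef_pos_of_posDef hA hA' hB) (mcoef_pos_of_posDef hB hB' hA)
  rw [dmet, div_lt_one (by linarith)]
  linarith

lemma dmet_eq_one_iff_not_posDef (hA : A ∈ SD D) (hA' : A.PosDef) (hB : B ∈ SD D) :
    dmet A B = 1 ↔ ¬ B.PosDef := by
  have h0 := mcoef_mul_mcoef_nonneg hA hB
  rw [dmet, div_eq_one_iff_eq (by linarith)]
  refine ⟨fun h hB' => ?_, fun hB' => ?_⟩
  · have := mul_pos (mcoef_pos_of_posDef hA hA' hB) (mcoef_pos_of_posDef hB hB' hA)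
    linarith
  · rw [mcoef_eq_zero_of_not_posDef hA hA' hB hB', mul_zero, sub_zero, add_zero]

end dmet

/-- `d` is a metric on `𝕊_D` with the listed properties. -/
theorem stmt1 (D : ℕ) :
    (∀ A ∈ SD D, ∀ B ∈ SD D, 0 ≤ dmet A B) ∧
    (∀ A ∈ SD D, ∀ B ∈ SD D, (dmet A B = 0 ↔ A = B)) ∧
    (∀ A ∈ SD D, ∀ B ∈ SD D, dmet A B = dmet B A) ∧
    (∀ A ∈ SD D, ∀ B ∈ SD D, ∀ C ∈ SD D, dmet A C ≤ dmet A B + dmet B C) ∧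
    (∀ A ∈ SD D, ∀ B ∈ SD D,
      (1 / 2) * traceNorm (A - B) ≤ dmet A B ∧ dmet A B ≤ 1) ∧
    (∀ A ∈ SDo D, ∀ B ∈ SDo D, dmet A B < 1) ∧
    (∀ A ∈ SDo D, ∀ B ∈ SD D, (dmet A B = 1 ↔ B ∈ SD D \ SDo D)) := by
  have hSD {A : Mat D} (hA : A ∈ SDo D) : A ∈ SD D := ⟨hA.1.posSemidef, hA.2⟩
  refine ⟨fun A hA B hB => dmet_nonneg hA hB, fun A hA B hB => dmet_eq_zero_iff hA hB,
    fun A _ B _ => dmet_comm A B, fun A hA B hB C hC => dmet_triangle hA hB hC,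
    fun A hA B hB => ⟨half_traceNorm_sub_le_dmet hA hB, dmet_le_one hA hB⟩,
    fun A hA B hB => dmet_lt_one_of_posDef (hSD hA) hA.1 (hSD hB) hB.1,
    fun A hA B hB => ?_⟩
  rw [dmet_eq_one_iff_not_posDef (hSD hA) hA.1 hB]
  exact ⟨fun h => ⟨hB, fun hB' => h hB'.1⟩, fun h hB' => h.2 ⟨hB', hB.2⟩⟩

end
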